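/- Let G=(V,E) be a graph. Define B mapping f : V → {0,1,2} to B(f) : V → {0,1,2} determined by: V_2(B(f)) = V_2(f); V_0(B(f)) = {v ∈ V_0(f) : |N(v) ∩ V_2(f)| = 1}; V_1(B(f)) = V_1(f) ∪ {v ∈ V_0(f) : |N(v) ∩ V_2(f)| ≥ 2}. Then B restricts to a bijection from the set of minimal Roman dominating functions on G onto the set of minimal perfect Roman dominating functions on G, and its inverse B^{-1} is given by: V_2(B^{-1}(g)) = V_2(g); V_0(B^{-1}(g)) = V_0(g) ∪ {v ∈ V_1(g) : |N(v) ∩ V_2(g)| ≥ 2}; V_1(B^{-1}(g)) = {v ∈ V_1(g) : |N(v) ∩ V_2(g)| = 0}. -/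
import Mathlib


/-- A Roman dominating function: every vertex with value 0 has a neighbor with value 2. -/
def IsRDF {V : Type*} (G : SimpleGraph V) (f : V → Fin 3) : Prop :=
  ∀ v, f v = 0 → ∃ u, G.Adj v u ∧ f u = 2

/-- A perfect Roman dominating function: every vertex with value 0 has exactly one
neighbor with value 2. -/
def IsPRDF {V : Type*} (G : SimpleGraph V) (f : V → Fin 3) : Prop :=
  ∀ v, f v = 0 → ∃! u, G.Adj v u ∧ f u = 2

/-- The map `B`: `V_2(B(f)) = V_2(f)`,
`V_0(B(f)) = {v ∈ V_0(f) : |N(v) ∩ V_2(f)| = 1}`, and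
`V_1(B(f)) = V_1(f) ∪ {v ∈ V_0(f) : |N(v) ∩ V_2(f)| ≥ 2}`. -/
def Bmap {V : Type*} [Fintype V] [DecidableEq V] (G : SimpleGraph V)
    [DecidableRel G.Adj] (f : V → Fin 3) : V → Fin 3 :=
  fun v =>
    if f v = 2 then 2
    else if f v = 1 then 1
    else if ((G.neighborFinset v).filter (fun u => f u = 2)).card = 1 then 0 else 1

/-- The map `B⁻¹`: `V_2(B⁻¹(g)) = V_2(g)`,
`V_0(B⁻¹(g)) = V_0(g) ∪ {v ∈ V_1(g) : |N(v) ∩ V_2(g)| ≥ 2}`, and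
`V_1(B⁻¹(g)) = {v ∈ V_1(g) : |N(v) ∩ V_2(g)| = 0}`. -/
def Binv {V : Type*} [Fintype V] [DecidableEq V] (G : SimpleGraph V)
    [DecidableRel G.Adj] (g : V → Fin 3) : V → Fin 3 :=
  fun v =>
    if g v = 2 then 2
    else if g v = 0 then 0
    else if ((G.neighborFinset v).filter (fun u => g u = 2)).card = 0 then 1 else 0

set_option linter.unusedSectionVars false

section Aux

variable {V : Type*} [Fintype V] [DecidableEq V] (G : SimpleGraph V) [DecidableRel G.Adj]

/-- number of 2-neighbors -/
def N2 (f : V → Fin 3) (v : V) : ℕ := ((G.neighborFinset v).filter (fun u => f u = 2)).card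

lemma le_apply {f g : V → Fin 3} (h : f ≤ g) (v : V) : (f v).val ≤ (g v).val := h v

lemma mem_filt {f : V → Fin 3} {v u : V} :
    u ∈ (G.neighborFinset v).filter (fun u => f u = 2) ↔ G.Adj v u ∧ f u = 2 := by
  simp [Finset.mem_filter, SimpleGraph.mem_neighborFinset]

lemma card_one_iff {f : V → Fin 3} {v : V} :
    N2 G f v = 1 ↔ ∃! u, G.Adj v u ∧ f u = 2 := by
  rw [N2, Finset.card_eq_one]
  constructor
  · rintro ⟨a, ha⟩
    have hma : a ∈ (G.neighborFinset v).filter (fun u => f u = 2) := by simp [ha]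
    refine ⟨a, (mem_filt G).1 hma, fun y hy => ?_⟩
    have : y ∈ (G.neighborFinset v).filter (fun u => f u = 2) := (mem_filt G).2 hy
    rw [ha, Finset.mem_singleton] at this; exact this
  · rintro ⟨a, ha, hu⟩
    refine ⟨a, Finset.eq_singleton_iff_unique_mem.2 ⟨(mem_filt G).2 ha, fun y hy => ?_⟩⟩
    exact hu y ((mem_filt G).1 hy)

lemma nonzero_of_mem {f : V → Fin 3} {v u : V} (h1 : G.Adj v u) (h2 : f u = 2) :
    N2 G f v ≠ 0 :=
  Finset.card_ne_zero.2 ⟨u, (mem_filt G).2 ⟨h1, h2⟩⟩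

lemma exists_of_nonzero {f : V → Fin 3} {v : V} (h : N2 G f v ≠ 0) :
    ∃ u, G.Adj v u ∧ f u = 2 := by
  obtain ⟨u, hu⟩ := Finset.card_ne_zero.1 h |>.exists_mem
  exact ⟨u, (mem_filt G).1 hu⟩

lemma filt_congr {f g : V → Fin 3} (h : ∀ x, f x = 2 ↔ g x = 2) (v : V) :
    (G.neighborFinset v).filter (fun u => f u = 2)
      = (G.neighborFinset v).filter (fun u => g u = 2) :=
  Finset.filter_congr (fun x _ => by simp [h x])

lemma bmap_two_iff {f : V → Fin 3} {v : V} : Bmap G f v = 2 ↔ f v = 2 := by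
  unfold Bmap; split_ifs with h1 h2 h3 <;> simp_all

lemma binv_two_iff {g : V → Fin 3} {v : V} : Binv G g v = 2 ↔ g v = 2 := by
  unfold Binv; split_ifs with h1 h2 h3 <;> simp_all

lemma le_bmap (f : V → Fin 3) : f ≤ Bmap G f := by
  intro v; unfold Bmap; dsimp only; split_ifs with h1 h2 h3 <;>
    exact Fin.le_def.2 (by omega)

lemma binv_le (g : V → Fin 3) : Binv G g ≤ g := by
  intro v; unfold Binv; dsimp only; split_ifs with h1 h2 h3 <;>
    exact Fin.le_def.2 (by omega)

lemma bmap_of_one {f : V → Fin 3} {v : V} (h : f v = 1) : Bmap G f v = 1 := by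
  unfold Bmap; split_ifs with h1 h2 <;> omega

lemma bmap_of_zero_one {f : V → Fin 3} {v : V} (h : f v = 0) (hc : N2 G f v = 1) :
    Bmap G f v = 0 := by
  unfold Bmap
  rw [show ((G.neighborFinset v).filter (fun u => f u = 2)).card = N2 G f v from rfl]
  split_ifs with h1 h2 h3 <;> omega

lemma bmap_of_zero_ne {f : V → Fin 3} {v : V} (h : f v = 0) (hc : N2 G f v ≠ 1) :
    Bmap G f v = 1 := by
  unfold Bmap
  rw [show ((G.neighborFinset v).filter (fun u => f u = 2)).card = N2 G f v from rfl]
  split_ifs with h1 h2 h3 <;> omega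

lemma bmap_zero {f : V → Fin 3} {v : V} (h : Bmap G f v = 0) :
    f v = 0 ∧ N2 G f v = 1 := by
  unfold Bmap at h
  rw [show ((G.neighborFinset v).filter (fun u => f u = 2)).card = N2 G f v from rfl] at h
  split_ifs at h with h1 h2 h3
  · exact absurd h (by decide)
  · exact absurd h (by decide)
  · exact ⟨by omega, h3⟩
  · exact absurd h (by decide)

lemma binv_of_zero {g : V → Fin 3} {v : V} (h : g v = 0) : Binv G g v = 0 := by
  unfold Binv; split_ifs <;> omega

lemma binv_of_one_zero {g : V → Fin 3} {v : V} (h : g v = 1) (hc : N2 G g v = 0) :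
    Binv G g v = 1 := by
  unfold Binv
  rw [show ((G.neighborFinset v).filter (fun u => g u = 2)).card = N2 G g v from rfl]
  split_ifs <;> omega

lemma binv_of_one_ne {g : V → Fin 3} {v : V} (h : g v = 1) (hc : N2 G g v ≠ 0) :
    Binv G g v = 0 := by
  unfold Binv
  rw [show ((G.neighborFinset v).filter (fun u => g u = 2)).card = N2 G g v from rfl]
  split_ifs <;> omega

lemma binv_zero {g : V → Fin 3} {v : V} (h : Binv G g v = 0) :
    g v = 0 ∨ (g v = 1 ∧ N2 G g v ≠ 0) := by
  unfold Binv at h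
  rw [show ((G.neighborFinset v).filter (fun u => g u = 2)).card = N2 G g v from rfl] at h
  split_ifs at h with h1 h2 h3
  · exact absurd h (by decide)
  · exact Or.inl h2
  · exact absurd h (by decide)
  · exact Or.inr ⟨by omega, h3⟩

/-- B of an RDF is a pRDF. -/
lemma bmap_prdf {f : V → Fin 3} (hf : IsRDF G f) : IsPRDF G (Bmap G f) := by
  intro v hv
  obtain ⟨h0, hc⟩ := bmap_zero G hv
  have he : ∀ x, f x = 2 ↔ Bmap G f x = 2 := fun x => (bmap_two_iff G).symm
  obtain ⟨u, ⟨hu1, hu2⟩, hu3⟩ := (card_one_iff G (f := f) (v := v)).1 hc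
  exact ⟨u, ⟨hu1, (he u).1 hu2⟩, fun y hy => hu3 y ⟨hy.1, (he y).2 hy.2⟩⟩

/-- B⁻¹ of a pRDF is an RDF. -/
lemma binv_rdf {g : V → Fin 3} (hg : IsPRDF G g) : IsRDF G (Binv G g) := by
  intro v hv
  rcases binv_zero G hv with h | ⟨h1, hc⟩
  · obtain ⟨u, ⟨hu1, hu2⟩, _⟩ := hg v h
    exact ⟨u, hu1, (binv_two_iff G).2 hu2⟩
  · obtain ⟨u, hu1, hu2⟩ := exists_of_nonzero G hc
    exact ⟨u, hu1, (binv_two_iff G).2 hu2⟩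

/-- minimal RDF: 1-vertices have no 2-neighbor. -/
lemma min_rdf_p1 {f : V → Fin 3} (hf : Minimal (IsRDF G) f) :
    ∀ v, f v = 1 → N2 G f v = 0 := by
  intro v hv
  by_contra hc
  obtain ⟨u, hu1, hu2⟩ := exists_of_nonzero G hc
  set f' := Function.update f v 0 with hf'
  have hne : u ≠ v := fun h => by rw [h, hv] at hu2; exact absurd hu2 (by decide)
  have hrdf : IsRDF G f' := by
    intro w hw
    by_cases hwv : w = v
    · subst hwv
      exact ⟨u, hu1, by simp [hf', Function.update_of_ne hne, hu2]⟩
    · have hfw : f w = 0 := by rwa [hf', Function.update_of_ne hwv] at hw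
      obtain ⟨x, hx1, hx2⟩ := hf.1 w hfw
      have hxv : x ≠ v := fun h => by rw [h, hv] at hx2; exact absurd hx2 (by decide)
      exact ⟨x, hx1, by simp [hf', Function.update_of_ne hxv, hx2]⟩
  have hle : f' ≤ f := by
    intro w
    by_cases hwv : w = v
    · subst hwv
      show (f' w).val ≤ (f w).val
      simp [hf']
    · rw [hf', Function.update_of_ne hwv]
  have h2 := le_apply (hf.2 hrdf hle) v
  rw [hf'] at h2
  simp only [Function.update_self] at h2
  omega

/-- minimal RDF: every 2-vertex has a private 0-neighbor. -/
lemma min_rdf_p2 {f : V → Fin 3} (hf : Minimal (IsRDF G) f) :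
    ∀ v, f v = 2 → ∃ u, G.Adj v u ∧ f u = 0 ∧ N2 G f u = 1 := by
  intro v hv
  by_contra hc
  push_neg at hc
  set f' := Function.update f v 1 with hf'
  have hrdf : IsRDF G f' := by
    intro w hw
    have hwv : w ≠ v := fun h => by
      rw [h] at hw; simp [hf'] at hw
    have hfw : f w = 0 := by rwa [hf', Function.update_of_ne hwv] at hw
    obtain ⟨x, hx1, hx2⟩ := hf.1 w hfw
    by_cases hxv : x = v
    · rw [hxv] at hx1
      have hN : N2 G f w ≠ 1 := hc w hx1.symm hfw
      have hmem : v ∈ (G.neighborFinset w).filter (fun u => f u = 2) :=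
        (mem_filt G).2 ⟨hx1, hv⟩
      have h1lt : 1 < N2 G f w := by
        have : 0 < N2 G f w := Finset.card_pos.2 ⟨v, hmem⟩
        omega
      obtain ⟨a, ha, b, hb, hab⟩ := Finset.one_lt_card.1 h1lt
      have hor : a ≠ v ∨ b ≠ v := by
        rcases eq_or_ne a v with h | h
        · right; rw [h] at hab; exact hab.symm
        · left; exact h
      rcases hor with h | h
      · obtain ⟨ha1, ha2⟩ := (mem_filt G).1 ha
        exact ⟨a, ha1, by rw [hf', Function.update_of_ne h]; exact ha2⟩
      · obtain ⟨hb1, hb2⟩ := (mem_filt G).1 hb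
        exact ⟨b, hb1, by rw [hf', Function.update_of_ne h]; exact hb2⟩
    · exact ⟨x, hx1, by rw [hf', Function.update_of_ne hxv]; exact hx2⟩
  have hle : f' ≤ f := by
    intro w
    by_cases hwv : w = v
    · subst hwv
      show (f' w).val ≤ (f w).val
      simp [hf', hv]
    · rw [hf', Function.update_of_ne hwv]
  have h2 := le_apply (hf.2 hrdf hle) v
  rw [hf'] at h2
  simp only [Function.update_self] at h2
  omega

/-- B⁻¹ ∘ B = id on RDFs satisfying P1. -/
lemma binv_bmap {f : V → Fin 3} (hf : IsRDF G f) (hp1 : ∀ v, f v = 1 → N2 G f v = 0) :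
    Binv G (Bmap G f) = f := by
  funext v
  have he : ∀ x, Bmap G f x = 2 ↔ f x = 2 := fun x => bmap_two_iff G
  have hcard : ∀ w, N2 G (Bmap G f) w = N2 G f w := fun w => by
    unfold N2; rw [filt_congr G he]
  have h3 : f v = 0 ∨ f v = 1 ∨ f v = 2 := by omega
  rcases h3 with h | h | h
  · have hge : N2 G f v ≠ 0 := by
      obtain ⟨u, hu1, hu2⟩ := hf v h
      exact nonzero_of_mem G hu1 hu2
    by_cases hc : N2 G f v = 1
    · rw [binv_of_zero G (bmap_of_zero_one G h hc), h]
    · have h1 : Bmap G f v = 1 := bmap_of_zero_ne G h hc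
      rw [binv_of_one_ne G h1 (by rw [hcard]; exact hge), h]
  · have h1 : Bmap G f v = 1 := bmap_of_one G h
    rw [binv_of_one_zero G h1 (by rw [hcard]; exact hp1 v h), h]
  · have h2 : Bmap G f v = 2 := (bmap_two_iff G).2 h
    rw [(binv_two_iff G).2 h2, h]

/-- B ∘ B⁻¹ = id on pRDFs satisfying the dual condition. -/
lemma bmap_binv {g : V → Fin 3} (hg : IsPRDF G g) (hp : ∀ v, g v = 1 → N2 G g v ≠ 1) :
    Bmap G (Binv G g) = g := by
  funext v
  have he : ∀ x, Binv G g x = 2 ↔ g x = 2 := fun x => binv_two_iff G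
  have hcard : ∀ w, N2 G (Binv G g) w = N2 G g w := fun w => by
    unfold N2; rw [filt_congr G he]
  have h3 : g v = 0 ∨ g v = 1 ∨ g v = 2 := by omega
  rcases h3 with h | h | h
  · have hc : N2 G g v = 1 := (card_one_iff G).2 (hg v h)
    rw [bmap_of_zero_one G (binv_of_zero G h) (by rw [hcard]; exact hc), h]
  · by_cases hc : N2 G g v = 0
    · rw [bmap_of_one G (binv_of_one_zero G h hc), h]
    · have h0 : Binv G g v = 0 := binv_of_one_ne G h hc
      rw [bmap_of_zero_ne G h0 (by rw [hcard]; exact hp v h), h]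
  · rw [(bmap_two_iff G).2 ((binv_two_iff G).2 h), h]

/-- minimal pRDF: 1-vertices don't have exactly one 2-neighbor. -/
lemma min_prdf_p {g : V → Fin 3} (hg : Minimal (IsPRDF G) g) :
    ∀ v, g v = 1 → N2 G g v ≠ 1 := by
  intro v hv hc
  set g' := Function.update g v 0 with hg'
  have heq : ∀ x, g' x = 2 ↔ g x = 2 := by
    intro x
    by_cases hxv : x = v
    · subst hxv
      simp only [hg', Function.update_self]
      rw [hv]
      constructor <;> (intro h; exact absurd h (by decide))
    · simp [hg', Function.update_of_ne hxv]
  have hprdf : IsPRDF G g' := by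
    intro w hw
    by_cases hwv : w = v
    · subst hwv
      obtain ⟨u, ⟨hu1, hu2⟩, hu3⟩ := (card_one_iff G).1 hc
      exact ⟨u, ⟨hu1, (heq u).2 hu2⟩, fun y hy => hu3 y ⟨hy.1, (heq y).1 hy.2⟩⟩
    · have hgw : g w = 0 := by rwa [hg', Function.update_of_ne hwv] at hw
      obtain ⟨u, ⟨hu1, hu2⟩, hu3⟩ := hg.1 w hgw
      exact ⟨u, ⟨hu1, (heq u).2 hu2⟩, fun y hy => hu3 y ⟨hy.1, (heq y).1 hy.2⟩⟩
  have hle : g' ≤ g := by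
    intro w
    by_cases hwv : w = v
    · subst hwv
      show (g' w).val ≤ (g w).val
      simp [hg']
    · rw [hg', Function.update_of_ne hwv]
  have h2 := le_apply (hg.2 hprdf hle) v
  rw [hg'] at h2
  simp only [Function.update_self] at h2
  omega

/-- B maps minimal RDFs to minimal pRDFs. -/
lemma claimA {f : V → Fin 3} (hf : Minimal (IsRDF G) f) : Minimal (IsPRDF G) (Bmap G f) := by
  constructor
  · exact bmap_prdf G hf.1
  · intro g hg hle
    -- step 1: 2-sets equal
    have h2set : ∀ x, g x = 2 ↔ f x = 2 := by
      intro x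
      constructor
      · intro hx
        have h1 := le_apply hle x
        rw [hx] at h1
        exact (bmap_two_iff G).1 (by omega)
      · intro hx
        obtain ⟨u, hu1, hu2, hu3⟩ := min_rdf_p2 G hf x hx
        have hxmem : x ∈ (G.neighborFinset u).filter (fun z => f z = 2) :=
          (mem_filt G).2 ⟨hu1.symm, hx⟩
        have hsing : (G.neighborFinset u).filter (fun z => f z = 2) = {x} := by
          obtain ⟨a, ha⟩ := Finset.card_eq_one.1 hu3
          rw [ha] at hxmem ⊢
          rw [Finset.mem_singleton] at hxmem
          rw [hxmem]
        have hgu : g u = 0 := by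
          have h1 := le_apply hle u
          rw [bmap_of_zero_one G hu2 hu3] at h1
          omega
        obtain ⟨y, ⟨hy1, hy2⟩, _⟩ := hg u hgu
        have hfy : f y = 2 := by
          have h1 := le_apply hle y
          rw [hy2] at h1
          exact (bmap_two_iff G).1 (by omega)
        have hmem : y ∈ (G.neighborFinset u).filter (fun z => f z = 2) :=
          (mem_filt G).2 ⟨hy1, hfy⟩
        rw [hsing, Finset.mem_singleton] at hmem
        rwa [← hmem]
    -- step 2: Bmap f ≤ g
    intro v
    show (Bmap G f v).val ≤ (g v).val
    have h3 : f v = 0 ∨ f v = 1 ∨ f v = 2 := by omega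
    rcases h3 with h | h | h
    · by_cases hc : N2 G f v = 1
      · rw [bmap_of_zero_one G h hc]; omega
      · rw [bmap_of_zero_ne G h hc]
        have hge : N2 G f v ≠ 0 := by
          obtain ⟨u, hu1, hu2⟩ := hf.1 v h
          exact nonzero_of_mem G hu1 hu2
        have h1lt : 1 < N2 G f v := by omega
        obtain ⟨a, ha, b, hb, hab⟩ := Finset.one_lt_card.1 h1lt
        have hgv : g v ≠ 0 := by
          intro hgv0
          obtain ⟨y, hy, huniq⟩ := hg v hgv0
          obtain ⟨ha1, ha2⟩ := (mem_filt G).1 ha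
          obtain ⟨hb1, hb2⟩ := (mem_filt G).1 hb
          have hay : a = y := huniq a ⟨ha1, (h2set a).2 ha2⟩
          have hby : b = y := huniq b ⟨hb1, (h2set b).2 hb2⟩
          exact hab (hay.trans hby.symm)
        omega
    · rw [bmap_of_one G h]
      have hgv : g v ≠ 0 := by
        intro hgv0
        obtain ⟨y, ⟨hy1, hy2⟩, _⟩ := hg v hgv0
        have hfy : f y = 2 := (h2set y).1 hy2
        have hN : N2 G f v = 0 := min_rdf_p1 G hf v h
        exact nonzero_of_mem G hy1 hfy hN
      omega
    · rw [(bmap_two_iff G).2 h]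
      have := (h2set v).2 h
      omega

/-- B⁻¹ maps minimal pRDFs to minimal RDFs. -/
lemma claimB {g : V → Fin 3} (hg : Minimal (IsPRDF G) g) : Minimal (IsRDF G) (Binv G g) := by
  constructor
  · exact binv_rdf G hg.1
  · intro f' hf' hle
    have hble : Bmap G f' ≤ g := by
      intro v
      show (Bmap G f' v).val ≤ (g v).val
      have h3 : g v = 0 ∨ g v = 1 ∨ g v = 2 := by omega
      rcases h3 with h | h | h
      · have hbv : Binv G g v = 0 := binv_of_zero G h
        have hfv : f' v = 0 := by
          have h1 := le_apply hle v
          rw [hbv] at h1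
          omega
        have hge1 : N2 G f' v ≠ 0 := by
          obtain ⟨u, hu1, hu2⟩ := hf' v hfv
          exact nonzero_of_mem G hu1 hu2
        have hle1 : N2 G f' v ≤ N2 G g v := by
          apply Finset.card_le_card
          intro x hx
          obtain ⟨hx1, hx2⟩ := (mem_filt G).1 hx
          have hgx : g x = 2 := by
            have h1 := le_apply hle x
            have h2 := le_apply (binv_le G g) x
            rw [hx2] at h1
            omega
          exact (mem_filt G).2 ⟨hx1, hgx⟩
        have hg1 : N2 G g v = 1 := (card_one_iff G).2 (hg.1 v h)
        rw [bmap_of_zero_one G hfv (by omega)]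
        omega
      · have hfv : f' v ≠ 2 := by
          intro hfv2
          have h1 := le_apply hle v
          have h2 := le_apply (binv_le G g) v
          rw [hfv2, h] at *
          omega
        have hb2 : Bmap G f' v ≠ 2 := fun hh => hfv ((bmap_two_iff G).1 hh)
        omega
      · omega
    have hgeq : g = Bmap G f' := le_antisymm (hg.2 (bmap_prdf G hf') hble) hble
    have hp1 : ∀ v, f' v = 1 → N2 G f' v = 0 := by
      intro v hv
      by_contra hc
      obtain ⟨u, hu1, hu2⟩ := exists_of_nonzero G hc
      have hbv : Bmap G f' v = 1 := bmap_of_one G hv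
      have hgv : g v = 1 := by rw [hgeq]; exact hbv
      have hbiv : Binv G g v = 1 := by
        have h1 := le_apply hle v
        have h2 := le_apply (binv_le G g) v
        rw [hv] at h1
        rw [hgv] at h2
        have : (Binv G g v).val = 1 := by omega
        omega
      have hN0 : N2 G g v = 0 := by
        by_contra hN
        rw [binv_of_one_ne G hgv hN] at hbiv
        exact absurd hbiv (by decide)
      have hgu : g u = 2 := by rw [hgeq]; exact (bmap_two_iff G).2 hu2
      exact nonzero_of_mem G hu1 hgu hN0
    have hfin : Binv G g = f' := by rw [hgeq, binv_bmap G hf' hp1]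
    rw [hfin]

end Aux

theorem stmt14 {V : Type*} [Fintype V] [DecidableEq V] (G : SimpleGraph V)
    [DecidableRel G.Adj] :
    -- B restricts to a bijection from the minimal Rdfs onto the minimal pRdfs
    Set.BijOn (Bmap G) {f : V → Fin 3 | Minimal (IsRDF G) f}
      {g : V → Fin 3 | Minimal (IsPRDF G) g} ∧
    -- and B⁻¹ is its inverse on these sets
    Set.InvOn (Binv G) (Bmap G) {f : V → Fin 3 | Minimal (IsRDF G) f}
      {g : V → Fin 3 | Minimal (IsPRDF G) g} := by
  have hmaps : Set.MapsTo (Bmap G) {f : V → Fin 3 | Minimal (IsRDF G) f}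
      {g : V → Fin 3 | Minimal (IsPRDF G) g} := fun f hf => claimA G hf
  have hleft : Set.LeftInvOn (Binv G) (Bmap G) {f : V → Fin 3 | Minimal (IsRDF G) f} :=
    fun f hf => binv_bmap G hf.1 (min_rdf_p1 G hf)
  have hright : Set.RightInvOn (Binv G) (Bmap G) {g : V → Fin 3 | Minimal (IsPRDF G) g} :=
    fun g hg => bmap_binv G hg.1 (min_prdf_p G hg)
  refine ⟨⟨hmaps, hleft.injOn, ?_⟩, hleft, hright⟩
  intro g hg
  exact ⟨Binv G g, claimB G hg, hright hg⟩
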